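/- If ξ^r = o(r) and ξ^a = o(1) as r → ∞ (with the derivative compatibility ∂_r ξ^μ = o(r^{m-1}) when ξ^μ = o(r^m), and angular/time derivatives of the same orders), then ξ automatically satisfies the asymptotic Killing conditions (L_ξ ḡ)_{rr} = o(r^{-2}), (L_ξ ḡ)_{ar} = o(r), (L_ξ ḡ)_{ab} = o(r²) for the AdS metric ḡ. -/

import Mathlib

open Filter

/-- Coordinate indices: `0 = τ`, `1 = r`, `A ∈ {2,…,n-1}` the angles `y^A`. -/
def idxC (n : ℕ) : Finset ℕ := insert 0 (insert 1 (Finset.Ico 2 n))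

/-- Partial derivative along coordinate `μ`. -/
noncomputable def pd (μ : ℕ) (F : (ℕ → ℝ) → ℝ) (p : ℕ → ℝ) : ℝ :=
  deriv (fun s => F (Function.update p μ s)) (p μ)

/-- `f_2 = 1`, `f_A = sin²y² ⋯ sin²y^{A-1}`. -/
noncomputable def fAc (A : ℕ) (p : ℕ → ℝ) : ℝ := ∏ j ∈ Finset.Ico 2 A, Real.sin (p j) ^ 2

/-- The AdS metric `ḡ`, with `p 1 = r`. -/
noncomputable def gbar (l : ℝ) (μ ν : ℕ) (p : ℕ → ℝ) : ℝ :=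
  if μ = 0 ∧ ν = 0 then -(1 + (p 1) ^ 2 / l ^ 2)
  else if μ = 1 ∧ ν = 1 then (1 + (p 1) ^ 2 / l ^ 2)⁻¹
  else if μ = ν then (p 1) ^ 2 * fAc μ p
  else 0

/-- `(L_ξ ḡ)_{μν} = ξ^λ ∂_λ ḡ_{μν} + ḡ_{λν} ∂_μ ξ^λ + ḡ_{μλ} ∂_ν ξ^λ`. -/
noncomputable def lieG (n : ℕ) (l : ℝ) (ξ : ℕ → (ℕ → ℝ) → ℝ) (μ ν : ℕ)
    (p : ℕ → ℝ) : ℝ :=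
  ∑ lam ∈ idxC n,
    (ξ lam p * pd lam (gbar l μ ν) p + gbar l lam ν p * pd μ (ξ lam) p
      + gbar l μ lam p * pd ν (ξ lam) p)

/-- `F = o(r^s)` as `r → ∞` at fixed `(τ, y)`. -/
def SmallO (F : (ℕ → ℝ) → ℝ) (s : ℤ) : Prop :=
  ∀ p : ℕ → ℝ,
    Tendsto (fun r : ℝ => F (Function.update p 1 r) / r ^ s) atTop (nhds 0)

/-! Along a ray `r ↦ (τ, r, y)` the AdS metric is diagonal with `ḡ_ττ, ḡ_AA = O(r²)`,
`ḡ_rr = O(r⁻²)`, `∂_r ḡ_rr = O(r⁻³)`, `∂_r ḡ_ττ, ∂_r ḡ_AA = O(r)` and `∂_c ḡ_AA = O(r²)` for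
`c ≠ r`, while every other derivative of `ḡ` vanishes. Because `ḡ` is diagonal, each component of
`L_ξ ḡ` is a short sum of products of these with components of `ξ` or of their derivatives, and the
orders of growth simply add up. -/

open Asymptotics Function

lemma mem_idxC_one (n : ℕ) : 1 ∈ idxC n := by
  simp [idxC]

lemma fAc_update_one (A : ℕ) (p : ℕ → ℝ) (s : ℝ) : fAc A (update p 1 s) = fAc A p :=
  Finset.prod_congr rfl fun j hj => by
    rw [update_of_ne (by have := (Finset.mem_Ico.1 hj).1; omega)]

lemma pd_update_self (μ : ℕ) (F : (ℕ → ℝ) → ℝ) (p : ℕ → ℝ) (r : ℝ) :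
    pd μ F (update p μ r) = deriv (fun s => F (update p μ s)) r := by
  simp only [pd, update_idem, update_self]

lemma pd_eq_zero_of_update {c : ℕ} {F : (ℕ → ℝ) → ℝ}
    (hF : ∀ p s, F (update p c s) = F p) : pd c F = 0 := by
  funext p
  simp only [pd, hF, deriv_const, Pi.zero_apply]

lemma gbar_of_ne (l : ℝ) {a b : ℕ} (h : a ≠ b) : gbar l a b = 0 := by
  funext p
  rw [gbar, if_neg (by omega), if_neg (by omega), if_neg h, Pi.zero_apply]

lemma gbar_comm (l : ℝ) (a b : ℕ) : gbar l a b = gbar l b a := by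
  rcases eq_or_ne a b with rfl | h
  · rfl
  · rw [gbar_of_ne l h, gbar_of_ne l h.symm]

lemma gbar_diag_of_two_le (l : ℝ) {a : ℕ} (ha : 2 ≤ a) (p : ℕ → ℝ) :
    gbar l a a p = p 1 ^ 2 * fAc a p := by
  rw [gbar, if_neg (by omega), if_neg (by omega), if_pos rfl]

lemma pd_gbar_of_ne (l : ℝ) (μ : ℕ) {a b : ℕ} (h : a ≠ b) : pd μ (gbar l a b) = 0 :=
  pd_eq_zero_of_update fun _ _ => by rw [gbar_of_ne l h]; rfl

lemma pd_gbar_one_one_of_ne (l : ℝ) {c : ℕ} (hc : c ≠ 1) : pd c (gbar l 1 1) = 0 :=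
  pd_eq_zero_of_update fun p s => by simp [gbar, update_of_ne hc.symm]

lemma pd_gbar_zero_zero_of_ne (l : ℝ) {c : ℕ} (hc : c ≠ 1) : pd c (gbar l 0 0) = 0 :=
  pd_eq_zero_of_update fun p s => by simp [gbar, update_of_ne hc.symm]

lemma pd_gbar_diag_update_one (l : ℝ) {a c : ℕ} (ha : 2 ≤ a) (hc : c ≠ 1) (p : ℕ → ℝ)
    (r : ℝ) : pd c (gbar l a a) (update p 1 r) = r ^ 2 * pd c (fAc a) p := by
  have hfun : (fun s => gbar l a a (update (update p 1 r) c s))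
      = fun s => r ^ 2 * fAc a (update p c s) := by
    funext s
    rw [gbar_diag_of_two_le l ha, update_comm hc.symm, fAc_update_one, update_self]
  simp only [pd, hfun, deriv_const_mul_field, update_of_ne hc]

lemma sum_gbar_mul {s : Finset ℕ} (l : ℝ) {ν : ℕ} (hν : ν ∈ s) (X : ℕ → (ℕ → ℝ) → ℝ) :
    ∑ lam ∈ s, gbar l lam ν * X lam = gbar l ν ν * X ν :=
  Finset.sum_eq_single_of_mem ν hν fun _ _ h => by rw [gbar_of_ne l h, zero_mul]

lemma lieG_eq_of_mem {n : ℕ} (l : ℝ) (ξ : ℕ → (ℕ → ℝ) → ℝ) {μ ν : ℕ} (hμ : μ ∈ idxC n)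
    (hν : ν ∈ idxC n) :
    lieG n l ξ μ ν = (∑ lam ∈ idxC n, ξ lam * pd lam (gbar l μ ν))
      + gbar l ν ν * pd μ (ξ ν) + gbar l μ μ * pd ν (ξ μ) := by
  have hν' := congrFun (sum_gbar_mul l hν fun lam => pd μ (ξ lam))
  have hμ' := congrFun (sum_gbar_mul l hμ fun lam => pd ν (ξ lam))
  funext p
  simp only [Finset.sum_apply, Pi.mul_apply, Pi.add_apply] at hν' hμ' ⊢
  simp only [lieG, Finset.sum_add_distrib, hν', ← hμ', gbar_comm l μ]

lemma lieG_comm (n : ℕ) (l : ℝ) (ξ : ℕ → (ℕ → ℝ) → ℝ) (μ ν : ℕ) :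
    lieG n l ξ μ ν = lieG n l ξ ν μ := by
  funext p
  refine Finset.sum_congr rfl fun lam _ => ?_
  rw [gbar_comm l μ ν, gbar_comm l lam ν, gbar_comm l μ lam]
  ring

lemma smallO_iff_isLittleO {F : (ℕ → ℝ) → ℝ} {s : ℤ} :
    SmallO F s ↔ ∀ p, (fun r => F (update p 1 r)) =o[atTop] (· ^ s) :=
  forall_congr' fun _ => (isLittleO_iff_tendsto'
    ((eventually_gt_atTop 0).mono fun _ hr h => absurd h (zpow_ne_zero _ hr.ne'))).symm

def BigO (F : (ℕ → ℝ) → ℝ) (s : ℤ) : Prop :=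
  ∀ p : ℕ → ℝ, (fun r => F (update p 1 r)) =O[atTop] (· ^ s)

lemma isBigO_zpow_zpow_atTop {a b : ℤ} (hab : a ≤ b) :
    (fun r : ℝ => r ^ a) =O[atTop] (· ^ b) :=
  IsBigO.of_bound 1 <| (eventually_ge_atTop 1).mono fun r hr => by
    rw [one_mul, Real.norm_of_nonneg (zpow_nonneg (by linarith) _),
      Real.norm_of_nonneg (zpow_nonneg (by linarith) _)]
    exact zpow_le_zpow_right₀ hr hab

lemma zpow_mul_zpow_eventuallyEq {a b c : ℤ} (h : a + b = c) :
    (fun r : ℝ => r ^ a * r ^ b) =ᶠ[atTop] (· ^ c) :=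
  (eventually_gt_atTop 0).mono fun r hr => by simp only [← h, zpow_add₀ hr.ne']

namespace SmallO

lemma zero (s : ℤ) : SmallO 0 s := smallO_iff_isLittleO.2 fun _ => isLittleO_zero _ _

lemma add {F G : (ℕ → ℝ) → ℝ} {s : ℤ} (hF : SmallO F s) (hG : SmallO G s) :
    SmallO (F + G) s :=
  smallO_iff_isLittleO.2 fun p => (smallO_iff_isLittleO.1 hF p).add (smallO_iff_isLittleO.1 hG p)

lemma sum {ι : Type*} {t : Finset ι} {F : ι → (ℕ → ℝ) → ℝ} {s : ℤ}
    (hF : ∀ i ∈ t, SmallO (F i) s) : SmallO (∑ i ∈ t, F i) s :=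
  smallO_iff_isLittleO.2 fun p => by
    simpa only [Finset.sum_apply] using
      IsLittleO.fun_sum fun i hi => smallO_iff_isLittleO.1 (hF i hi) p

lemma mul_bigO {F G : (ℕ → ℝ) → ℝ} {a b c : ℤ} (hF : SmallO F a) (hG : BigO G b)
    (h : a + b = c) : SmallO (F * G) c :=
  smallO_iff_isLittleO.2 fun p =>
    ((smallO_iff_isLittleO.1 hF p).mul_isBigO (hG p)).congr' .rfl (zpow_mul_zpow_eventuallyEq h)

end SmallO

namespace BigO

lemma mono {F : (ℕ → ℝ) → ℝ} {a b : ℤ} (hF : BigO F a) (hab : a ≤ b) : BigO F b :=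
  fun p => (hF p).trans (isBigO_zpow_zpow_atTop hab)

lemma mul_smallO {F G : (ℕ → ℝ) → ℝ} {a b c : ℤ} (hF : BigO F a) (hG : SmallO G b)
    (h : a + b = c) : SmallO (F * G) c :=
  mul_comm G F ▸ hG.mul_bigO hF (by omega)

end BigO

lemma gbar_one_one_update (l : ℝ) (p : ℕ → ℝ) (r : ℝ) :
    gbar l 1 1 (update p 1 r) = (1 + r ^ 2 / l ^ 2)⁻¹ := by
  simp [gbar]

lemma gbar_zero_zero_update (l : ℝ) (p : ℕ → ℝ) (r : ℝ) :
    gbar l 0 0 (update p 1 r) = -(1 + r ^ 2 / l ^ 2) := by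
  simp [gbar]

lemma gbar_diag_update_of_two_le (l : ℝ) {a : ℕ} (ha : 2 ≤ a) (p : ℕ → ℝ) (r : ℝ) :
    gbar l a a (update p 1 r) = fAc a p * r ^ 2 := by
  rw [gbar_diag_of_two_le l ha, update_self, fAc_update_one, mul_comm]

lemma pd_one_gbar_one_one_update (l : ℝ) (p : ℕ → ℝ) (r : ℝ) :
    pd 1 (gbar l 1 1) (update p 1 r) = -(2 * r / l ^ 2) / (1 + r ^ 2 / l ^ 2) ^ 2 := by
  have hu : HasDerivAt (fun s : ℝ => 1 + s ^ 2 / l ^ 2) (2 * r / l ^ 2) r := by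
    simpa using ((hasDerivAt_pow 2 r).div_const (l ^ 2)).const_add 1
  simp only [pd_update_self, gbar_one_one_update]
  exact (hu.inv (by positivity)).deriv

lemma pd_one_gbar_zero_zero_update (l : ℝ) (p : ℕ → ℝ) (r : ℝ) :
    pd 1 (gbar l 0 0) (update p 1 r) = -(2 / l ^ 2) * r := by
  have hu : HasDerivAt (fun s : ℝ => -(1 + s ^ 2 / l ^ 2)) (-(2 / l ^ 2) * r) r :=
    (((hasDerivAt_pow 2 r).div_const (l ^ 2)).const_add 1).fun_neg.congr_deriv
      (by push_cast; ring)
  simp only [pd_update_self, gbar_zero_zero_update]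
  exact hu.deriv

lemma pd_one_gbar_diag_update_of_two_le (l : ℝ) {a : ℕ} (ha : 2 ≤ a) (p : ℕ → ℝ) (r : ℝ) :
    pd 1 (gbar l a a) (update p 1 r) = 2 * fAc a p * r := by
  simp only [pd_update_self, gbar_diag_update_of_two_le l ha]
  exact ((hasDerivAt_pow 2 r).const_mul (fAc a p)).deriv.trans (by push_cast; ring)

lemma bigO_gbar_one_one {l : ℝ} (hl : l ≠ 0) : BigO (gbar l 1 1) (-2) := fun p =>
  IsBigO.of_bound (l ^ 2) <| (eventually_gt_atTop 0).mono fun r hr => by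
    rw [gbar_one_one_update, Real.norm_of_nonneg (by positivity),
      Real.norm_of_nonneg (by positivity), zpow_neg, zpow_ofNat]
    field_simp
    nlinarith

lemma bigO_pd_one_gbar_one_one {l : ℝ} (hl : l ≠ 0) : BigO (pd 1 (gbar l 1 1)) (-3) := fun p =>
  IsBigO.of_bound (2 * l ^ 2) <| (eventually_gt_atTop 0).mono fun r hr => by
    rw [pd_one_gbar_one_one_update, norm_div, norm_neg, Real.norm_of_nonneg (by positivity),
      Real.norm_of_nonneg (by positivity), Real.norm_of_nonneg (by positivity), zpow_neg,
      zpow_ofNat]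
    field_simp
    have : r ^ 4 ≤ (l ^ 2 + r ^ 2) ^ 2 := by nlinarith [sq_nonneg l, sq_nonneg r]
    nlinarith [mul_le_mul_of_nonneg_left this (sq_nonneg l)]

lemma bigO_gbar_diag (l : ℝ) {a : ℕ} (ha : a ≠ 1) : BigO (gbar l a a) 2 := fun p => by
  rcases (by omega : a = 0 ∨ 2 ≤ a) with rfl | ha
  · refine IsBigO.of_bound (1 + (l ^ 2)⁻¹) <| (eventually_ge_atTop 1).mono fun r hr => ?_
    rw [gbar_zero_zero_update, norm_neg, Real.norm_of_nonneg (by positivity),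
      Real.norm_of_nonneg (by positivity), div_eq_mul_inv]
    norm_cast
    nlinarith [inv_nonneg.2 (sq_nonneg l)]
  · simp only [gbar_diag_update_of_two_le l ha]
    exact_mod_cast isBigO_const_mul_self (fAc a p) _ _

lemma bigO_pd_one_gbar_diag (l : ℝ) {a : ℕ} (ha : a ≠ 1) :
    BigO (pd 1 (gbar l a a)) 1 := fun p => by
  rcases (by omega : a = 0 ∨ 2 ≤ a) with rfl | ha
  · simp only [pd_one_gbar_zero_zero_update, zpow_one]
    exact isBigO_const_mul_self _ _ _
  · simp only [pd_one_gbar_diag_update_of_two_le l ha, zpow_one]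
    exact isBigO_const_mul_self _ _ _

lemma bigO_pd_gbar_diag (l : ℝ) {a c : ℕ} (ha : a ≠ 1) (hc : c ≠ 1) :
    BigO (pd c (gbar l a a)) 2 := fun p => by
  rcases (by omega : a = 0 ∨ 2 ≤ a) with rfl | ha
  · simp only [pd_gbar_zero_zero_of_ne l hc, Pi.zero_apply]
    exact isBigO_zero _ _
  · simp only [pd_gbar_diag_update_one l ha hc, mul_comm _ (pd c (fAc a) p)]
    exact_mod_cast isBigO_const_mul_self _ _ _

section LieDerivative

variable {n : ℕ} {l : ℝ} {ξ : ℕ → (ℕ → ℝ) → ℝ}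

lemma smallO_lieG_one_one (hl : l ≠ 0) (hr : SmallO (ξ 1) 1) (hdrr : SmallO (pd 1 (ξ 1)) 0) :
    SmallO (lieG n l ξ 1 1) (-2) := by
  have hg := (bigO_gbar_one_one hl).mul_smallO hdrr (by norm_num : (-2 : ℤ) + 0 = -2)
  rw [lieG_eq_of_mem l ξ (mem_idxC_one n) (mem_idxC_one n)]
  refine ((SmallO.sum fun lam _ => ?_).add hg).add hg
  rcases eq_or_ne lam 1 with rfl | hlam
  · exact hr.mul_bigO (bigO_pd_one_gbar_one_one hl) (by norm_num)
  · rw [pd_gbar_one_one_of_ne l hlam, mul_zero]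
    exact SmallO.zero _

lemma smallO_lieG_one_right (hl : l ≠ 0) {a : ℕ} (ha : a ∈ idxC n) (ha1 : a ≠ 1)
    (hdcr : SmallO (pd a (ξ 1)) 1) (hdra : SmallO (pd 1 (ξ a)) (-1)) :
    SmallO (lieG n l ξ a 1) 1 := by
  rw [lieG_eq_of_mem l ξ ha (mem_idxC_one n)]
  simp only [pd_gbar_of_ne l _ ha1, mul_zero, Finset.sum_const_zero, zero_add]
  have hg := (bigO_gbar_one_one hl).mono (by norm_num : (-2 : ℤ) ≤ 0)
  exact (hg.mul_smallO hdcr (by norm_num)).add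
    ((bigO_gbar_diag l ha1).mul_smallO hdra (by norm_num))

lemma smallO_lieG_of_ne_one {a b : ℕ} (ha : a ∈ idxC n) (ha1 : a ≠ 1) (hb : b ∈ idxC n)
    (hb1 : b ≠ 1) (hr : SmallO (ξ 1) 1) (hξ : ∀ c ∈ idxC n, c ≠ 1 → SmallO (ξ c) 0)
    (hdab : SmallO (pd a (ξ b)) 0) (hdba : SmallO (pd b (ξ a)) 0) :
    SmallO (lieG n l ξ a b) 2 := by
  rw [lieG_eq_of_mem l ξ ha hb]
  refine ((SmallO.sum fun lam hmem => ?_).add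
    ((bigO_gbar_diag l hb1).mul_smallO hdab (by norm_num))).add
    ((bigO_gbar_diag l ha1).mul_smallO hdba (by norm_num))
  rcases eq_or_ne a b with rfl | hab
  · rcases eq_or_ne lam 1 with rfl | hlam
    · exact hr.mul_bigO (bigO_pd_one_gbar_diag l ha1) (by norm_num)
    · exact (hξ lam hmem hlam).mul_bigO (bigO_pd_gbar_diag l ha1 hlam) (by norm_num)
  · rw [pd_gbar_of_ne l _ hab, mul_zero]
    exact SmallO.zero _

end LieDerivative

theorem stmt15_general (n : ℕ) (l : ℝ) (hl : 0 < l)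
    (ξ : ℕ → (ℕ → ℝ) → ℝ)
    (hr : SmallO (ξ 1) 1)
    (ha : ∀ a ∈ idxC n, a ≠ 1 → SmallO (ξ a) 0)
    (hdrr : SmallO (pd 1 (ξ 1)) 0)
    (hdra : ∀ a ∈ idxC n, a ≠ 1 → SmallO (pd 1 (ξ a)) (-1))
    (hdcr : ∀ c ∈ idxC n, c ≠ 1 → SmallO (pd c (ξ 1)) 1)
    (hdca : ∀ c ∈ idxC n, c ≠ 1 → ∀ a ∈ idxC n, a ≠ 1 → SmallO (pd c (ξ a)) 0) :
    SmallO (lieG n l ξ 1 1) (-2) ∧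
    (∀ a ∈ idxC n, a ≠ 1 → SmallO (lieG n l ξ a 1) 1 ∧ SmallO (lieG n l ξ 1 a) 1) ∧
    (∀ a ∈ idxC n, a ≠ 1 → ∀ b ∈ idxC n, b ≠ 1 → SmallO (lieG n l ξ a b) 2) := by
  refine ⟨smallO_lieG_one_one hl.ne' hr hdrr, fun a hai ha1 => ?_,
    fun a hai ha1 b hbi hb1 =>
      smallO_lieG_of_ne_one hai ha1 hbi hb1 hr ha (hdca a hai ha1 b hbi hb1)
        (hdca b hbi hb1 a hai ha1)⟩
  have h := smallO_lieG_one_right hl.ne' hai ha1 (hdcr a hai ha1) (hdra a hai ha1)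
  exact ⟨h, lieG_comm n l ξ a 1 ▸ h⟩

/-- A vector field with `ξ^r = o(r)`, `ξ^a = o(1)` and compatible fall-off of
its derivatives automatically satisfies the asymptotic Killing conditions
`(L_ξḡ)_{rr} = o(r^{-2})`, `(L_ξḡ)_{ar} = o(r)`, `(L_ξḡ)_{ab} = o(r²)`. -/
theorem stmt15 (n : ℕ) (hn : 3 ≤ n) (l : ℝ) (hl : 0 < l)
    (ξ : ℕ → (ℕ → ℝ) → ℝ)
    (hr : SmallO (ξ 1) 1)
    (ha : ∀ a ∈ idxC n, a ≠ 1 → SmallO (ξ a) 0)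
    (hdrr : SmallO (pd 1 (ξ 1)) 0)
    (hdra : ∀ a ∈ idxC n, a ≠ 1 → SmallO (pd 1 (ξ a)) (-1))
    (hdcr : ∀ c ∈ idxC n, c ≠ 1 → SmallO (pd c (ξ 1)) 1)
    (hdca : ∀ c ∈ idxC n, c ≠ 1 → ∀ a ∈ idxC n, a ≠ 1 → SmallO (pd c (ξ a)) 0) :
    SmallO (lieG n l ξ 1 1) (-2) ∧
    (∀ a ∈ idxC n, a ≠ 1 → SmallO (lieG n l ξ a 1) 1 ∧ SmallO (lieG n l ξ 1 a) 1) ∧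
    (∀ a ∈ idxC n, a ≠ 1 → ∀ b ∈ idxC n, b ≠ 1 → SmallO (lieG n l ξ a b) 2) :=
  stmt15_general n l hl ξ hr ha hdrr hdra hdcr hdca
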